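/- Fix n ≥ 1. Let A_1 be the 2n×2n real matrix with entries (A_1)_{2k−1,2k} = (A_1)_{2k,2k−1} = 1 for 1 ≤ k ≤ n, (A_1)_{2k,2k+1} = (A_1)_{2k+1,2k} = −1 for 1 ≤ k ≤ n−1, and 0 elsewhere; let D = diag(1,−1,…,−1) of size 2n, and for k ≥ 1 let A_{k+1} = A_1 ⊗ I_{(2n)^k} + D ⊗ A_k. Let β > 0 be a real root of g_n such that g_n has no root in (0,β). Then for every k ≥ 1, the minimum eigenvalue of A_k² equals kβ; equivalently, every eigenvalue μ of A_k² satisfies μ ≥ kβ and kβ is an eigenvalue of A_k². -/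

import Mathlib

open Kronecker Matrix

/-- A matrix `M` has real eigenvalue `μ` if `M x = μ x` for some nonzero vector `x`. -/
def HasEig {I : Type*} [Fintype I] (M : Matrix I I ℝ) (μ : ℝ) : Prop :=
  ∃ x : I → ℝ, x ≠ 0 ∧ M.mulVec x = μ • x

/-- The signed adjacency matrix `A_1` of the path `P_{2n}`: in 1-indexed terms,
`(A_1)_{2k−1,2k} = (A_1)_{2k,2k−1} = 1` for `1 ≤ k ≤ n` and
`(A_1)_{2k,2k+1} = (A_1)_{2k+1,2k} = −1` for `1 ≤ k ≤ n−1`, zero elsewhere.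
On the 0-indexed `Fin (2n)`, the entry at `(i, i+1)` is `1` when `i` is even and
`−1` when `i` is odd. -/
def signedPath (n : ℕ) : Matrix (Fin (2 * n)) (Fin (2 * n)) ℝ :=
  Matrix.of fun i j =>
    if (i : ℕ) + 1 = (j : ℕ) then (if (i : ℕ) % 2 = 0 then 1 else -1)
    else if (j : ℕ) + 1 = (i : ℕ) then (if (j : ℕ) % 2 = 0 then 1 else -1)
    else 0

/-- `D = diag(1, −1, 1, …, −1)` of size `2n`. -/
def altDiag (n : ℕ) : Matrix (Fin (2 * n)) (Fin (2 * n)) ℝ :=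
  Matrix.diagonal fun i => if (i : ℕ) % 2 = 0 then 1 else -1

/-- The signed adjacency matrices of `P_{2n}^k`: `APn n 0 = A_1` and
`APn n (k+1) = A_1 ⊗ I_{(2n)^(k+1)} + D ⊗ APn n k` (Kronecker products), so
`APn n k` is the matrix `A_{k+1}` of the paper; it is indexed by
`Fin (k+1) → Fin (2n)`, a type of cardinality `(2n)^(k+1)`. -/
noncomputable def APn (n : ℕ) :
    (k : ℕ) → Matrix (Fin (k + 1) → Fin (2 * n)) (Fin (k + 1) → Fin (2 * n)) ℝ
  | 0 => Matrix.reindex (Equiv.funUnique (Fin 1) (Fin (2 * n))).symm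
      (Equiv.funUnique (Fin 1) (Fin (2 * n))).symm (signedPath n)
  | (k + 1) =>
      Matrix.reindex (Fin.consEquiv fun _ : Fin (k + 2) => Fin (2 * n))
        (Fin.consEquiv fun _ : Fin (k + 2) => Fin (2 * n))
        (signedPath n ⊗ₖ
            (1 : Matrix (Fin (k + 1) → Fin (2 * n)) (Fin (k + 1) → Fin (2 * n)) ℝ)
          + altDiag n ⊗ₖ APn n k)

/-- The polynomial sequence `g_0(x) = 1`, `g_1(x) = x - 1`,
`g_k(x) = (x-2) g_{k-1}(x) - g_{k-2}(x)`. -/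
noncomputable def gPoly : ℕ → ℝ → ℝ
  | 0, _ => 1
  | 1, x => x - 1
  | (k + 2), x => (x - 2) * gPoly (k + 1) x - gPoly k x

/-!
Since `D² = 1` and `A₁ D = -D A₁`, squaring the recursion kills the cross terms:
`A_{k+1}² = A₁² ⊗ I + I ⊗ A_k²`, a Kronecker sum. The least eigenvalue of a Kronecker sum of
symmetric matrices is the sum of the least eigenvalues: tensor products of eigenvectors realise
the sum, and the shifted summands `(A₁² - β) ⊗ I` and `I ⊗ (A_k² - kβ)` are positive
semidefinite. So everything reduces to `A₁²`.

Extended by zero outside its index range, a vector `x` satisfies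
`(A₁² x)_t = c_t x_t - x_{t-2} - x_{t+2}` with `c_t = 2`, except `c_t = 1` at the two ends.
Along the even coordinates, and along the odd ones read backwards, the eigen-equation
`A₁² x = μ x` is therefore the recurrence `u_{j+2} = (2 - μ) u_{j+1} - u_j`, `u_1 = (1 - μ) u_0`,
solved by `u_j = (-1)^j g_j(μ) u_0`, with boundary condition `u_n = 0`. Hence the eigenvalues of
`A₁²` are exactly the roots of `g_n`. They are `≥ 0` as `A₁` is symmetric, and `0` is not one
since `g_n(0) = (-1)^n`, so the least of them is `β`.
-/

def kroneckerSum {R I J : Type*} [Semiring R] [DecidableEq I] [DecidableEq J]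
    (X : Matrix I I R) (Y : Matrix J J R) : Matrix (I × J) (I × J) R :=
  X ⊗ₖ 1 + 1 ⊗ₖ Y

theorem Matrix.IsHermitian.kroneckerSum {I J : Type*} [DecidableEq I] [DecidableEq J]
    {X : Matrix I I ℝ} {Y : Matrix J J ℝ} (hX : X.IsHermitian) (hY : Y.IsHermitian) :
    (kroneckerSum X Y).IsHermitian := by
  simp only [_root_.kroneckerSum, IsHermitian, conjTranspose_add, conjTranspose_kronecker,
    conjTranspose_one, hX.eq, hY.eq]

section Spectral

variable {I J : Type*} [Fintype I] [Fintype J] [DecidableEq I] [DecidableEq J]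

theorem hasEig_iff_mem_spectrum (M : Matrix I I ℝ) (μ : ℝ) : HasEig M μ ↔ μ ∈ spectrum ℝ M := by
  rw [← Matrix.spectrum_toLin', ← Module.End.hasEigenvalue_iff_mem_spectrum,
    Module.End.hasEigenvalue_iff, Submodule.ne_bot_iff]
  simp [HasEig, and_comm]

theorem spectrum_reindex (e : I ≃ J) (M : Matrix I I ℝ) :
    spectrum ℝ (reindex e e M) = spectrum ℝ M :=
  AlgEquiv.spectrum_eq (reindexAlgEquiv ℝ ℝ e) M

theorem kroneckerSum_sub_algebraMap (X : Matrix I I ℝ) (Y : Matrix J J ℝ) (a b : ℝ) :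
    kroneckerSum X Y - algebraMap ℝ _ (a + b) =
      (X - algebraMap ℝ _ a) ⊗ₖ 1 + 1 ⊗ₖ (Y - algebraMap ℝ _ b) := by
  simp only [kroneckerSum, Algebra.algebraMap_eq_smul_one, sub_eq_add_neg, ← neg_smul,
    add_kronecker, kronecker_add, smul_kronecker, kronecker_smul, one_kronecker_one]
  module

theorem add_mem_spectrum_kroneckerSum {X : Matrix I I ℝ} {Y : Matrix J J ℝ} {a b : ℝ}
    (ha : a ∈ spectrum ℝ X) (hb : b ∈ spectrum ℝ Y) : a + b ∈ spectrum ℝ (kroneckerSum X Y) := by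
  rw [← hasEig_iff_mem_spectrum] at *
  obtain ⟨u, hu, hXu⟩ := ha
  obtain ⟨v, hv, hYv⟩ := hb
  obtain ⟨i, hi⟩ := Function.ne_iff.mp hu
  obtain ⟨j, hj⟩ := Function.ne_iff.mp hv
  refine ⟨vec (vecMulVec v u), Function.ne_iff.mpr ⟨(i, j), mul_ne_zero hj hi⟩, ?_⟩
  rw [kroneckerSum, add_mulVec, kronecker_mulVec_vec, kronecker_mulVec_vec, transpose_one,
    Matrix.mul_one, Matrix.one_mul, vecMulVec_mul, vecMul_transpose, mul_vecMulVec, hXu, hYv,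
    vecMulVec_smul, smul_vecMulVec, ← vec_add, add_smul, vec_add, vec_smul, vec_smul, add_comm]

open scoped MatrixOrder in
theorem isLeast_spectrum_kroneckerSum {X : Matrix I I ℝ} {Y : Matrix J J ℝ} {a b : ℝ}
    (hX : X.IsHermitian) (hY : Y.IsHermitian)
    (ha : IsLeast (spectrum ℝ X) a) (hb : IsLeast (spectrum ℝ Y) b) :
    IsLeast (spectrum ℝ (kroneckerSum X Y)) (a + b) := by
  refine ⟨add_mem_spectrum_kroneckerSum ha.1 hb.1, fun μ hμ => ?_⟩
  have hXa : algebraMap ℝ _ a ≤ X := (algebraMap_le_iff_le_spectrum (a := X) hX).2 ha.2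
  have hYb : algebraMap ℝ _ b ≤ Y := (algebraMap_le_iff_le_spectrum (a := Y) hY).2 hb.2
  have : algebraMap ℝ _ (a + b) ≤ kroneckerSum X Y := by
    rw [Matrix.le_iff, kroneckerSum_sub_algebraMap]
    exact ((Matrix.le_iff.1 hXa).kronecker .one).add
      (PosSemidef.one.kronecker (Matrix.le_iff.1 hYb))
  exact (algebraMap_le_iff_le_spectrum (a := kroneckerSum X Y) (hX.kroneckerSum hY)).1 this μ hμ

end Spectral

theorem kronecker_one_add_kronecker_sq_of_anticomm {R I J : Type*} [CommRing R] [Fintype I]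
    [Fintype J] [DecidableEq I] [DecidableEq J] {B D : Matrix I I R} (hD : D * D = 1)
    (hBD : B * D + D * B = 0) (M : Matrix J J R) :
    (B ⊗ₖ (1 : Matrix J J R) + D ⊗ₖ M) ^ 2 = kroneckerSum (B ^ 2) (M ^ 2) := by
  calc (B ⊗ₖ (1 : Matrix J J R) + D ⊗ₖ M) ^ 2
      = (B * B) ⊗ₖ (1 : Matrix J J R) + (B * D + D * B) ⊗ₖ M + (D * D) ⊗ₖ (M * M) := by
        simp only [sq, add_mul, mul_add, ← mul_kronecker_mul, add_kronecker, Matrix.one_mul,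
          Matrix.mul_one]
        abel
    _ = kroneckerSum (B ^ 2) (M ^ 2) := by
        rw [hBD, hD, zero_kronecker, add_zero, sq, sq, kroneckerSum]

theorem signedPath_isHermitian (n : ℕ) : (signedPath n).IsHermitian := by
  rw [isHermitian_iff_isSymm]
  ext i j
  simp only [transpose_apply, signedPath, of_apply]
  split_ifs <;> first | rfl | omega

theorem altDiag_mul_self (n : ℕ) : altDiag n * altDiag n = 1 := by
  rw [altDiag, diagonal_mul_diagonal, ← diagonal_one]
  congr 1
  ext i
  split_ifs <;> norm_num

theorem signedPath_mul_altDiag_add_altDiag_mul (n : ℕ) :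
    signedPath n * altDiag n + altDiag n * signedPath n = 0 := by
  ext i j
  simp only [altDiag, Matrix.add_apply, mul_diagonal, diagonal_mul, Matrix.zero_apply, signedPath,
    of_apply]
  split_ifs <;> first | omega | norm_num

theorem APn_zero_sq (n : ℕ) : APn n 0 ^ 2 =
    reindex (Equiv.funUnique (Fin 1) (Fin (2 * n))).symm
      (Equiv.funUnique (Fin 1) (Fin (2 * n))).symm (signedPath n ^ 2) := by
  rw [APn, ← coe_reindexAlgEquiv ℝ ℝ, ← map_pow]

theorem APn_succ_sq (n k : ℕ) : APn n (k + 1) ^ 2 =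
    reindex (Fin.consEquiv fun _ : Fin (k + 2) => Fin (2 * n))
      (Fin.consEquiv fun _ : Fin (k + 2) => Fin (2 * n))
      (kroneckerSum (signedPath n ^ 2) (APn n k ^ 2)) := by
  rw [APn, ← coe_reindexAlgEquiv ℝ ℝ, ← map_pow, kronecker_one_add_kronecker_sq_of_anticomm
    (altDiag_mul_self n) (signedPath_mul_altDiag_add_altDiag_mul n)]

theorem APn_sq_isHermitian (n : ℕ) : ∀ k, (APn n k ^ 2).IsHermitian
  | 0 => by
    rw [APn_zero_sq]
    exact ((signedPath_isHermitian n).pow 2).submatrix _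
  | k + 1 => by
    rw [APn_succ_sq]
    exact (((signedPath_isHermitian n).pow 2).kroneckerSum (APn_sq_isHermitian n k)).submatrix _

def zeroExtend {α : Type*} [Zero α] {m : ℕ} (x : Fin m → α) (t : ℤ) : α :=
  if h : 0 ≤ t ∧ t < m then x ⟨t.toNat, by omega⟩ else 0

section ZeroExtend

variable {m : ℕ}

@[simp]
theorem zeroExtend_natCast {α : Type*} [Zero α] (x : Fin m → α) (i : Fin m) :
    zeroExtend x (i : ℕ) = x i := by
  simp [zeroExtend]

theorem zeroExtend_of_neg {α : Type*} [Zero α] (x : Fin m → α) {t : ℤ} (ht : t < 0) :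
    zeroExtend x t = 0 :=
  dif_neg (by omega)

theorem zeroExtend_of_le {α : Type*} [Zero α] (x : Fin m → α) {t : ℤ} (ht : m ≤ t) :
    zeroExtend x t = 0 :=
  dif_neg (by omega)

theorem zeroExtend_mul {α : Type*} [MulZeroClass α] (g : ℤ → α) (x : Fin m → α) (t : ℤ) :
    zeroExtend (fun j => g (j : ℕ) * x j) t = g t * zeroExtend x t := by
  unfold zeroExtend
  split_ifs with h
  · simp [Int.toNat_of_nonneg h.1]
  · rw [mul_zero]

theorem sum_ite_eq_zeroExtend {α : Type*} [AddCommMonoid α] (x : Fin m → α) (t : ℤ) :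
    ∑ j : Fin m, (if ((j : ℕ) : ℤ) = t then x j else 0) = zeroExtend x t := by
  unfold zeroExtend
  split_ifs with h
  · rw [Finset.sum_eq_single_of_mem ⟨t.toNat, by omega⟩ (Finset.mem_univ _)]
    · simp [Int.toNat_of_nonneg h.1]
    · intro j _ hj
      rw [if_neg]
      contrapose! hj
      ext
      simp [← hj]
  · refine Finset.sum_eq_zero fun j _ => if_neg ?_
    omega

end ZeroExtend

def altSign (t : ℤ) : ℝ := if Even t then 1 else -1

theorem altSign_add_one (t : ℤ) : altSign (t + 1) = -altSign t := by
  simp only [altSign, Int.even_add_one]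
  split_ifs <;> simp

theorem altSign_sub_one (t : ℤ) : altSign (t - 1) = -altSign t := by
  rw [← neg_neg (altSign (t - 1)), ← altSign_add_one, sub_add_cancel]

theorem altSign_mul_self (t : ℤ) : altSign t * altSign t = 1 := by
  unfold altSign
  split_ifs <;> norm_num

theorem signedPath_apply_eq (n : ℕ) (i j : Fin (2 * n)) :
    signedPath n i j = (if ((j : ℕ) : ℤ) = i + 1 then altSign (i : ℕ) else 0) +
      (if ((j : ℕ) : ℤ) = i - 1 then altSign (j : ℕ) else 0) := by
  simp only [signedPath, altSign, of_apply, Int.even_coe_nat, Nat.even_iff]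
  split_ifs <;> first | omega | norm_num

theorem zeroExtend_signedPath_mulVec (n : ℕ) (x : Fin (2 * n) → ℝ) {t : ℤ} (h0 : 0 ≤ t)
    (h1 : t < 2 * n) : zeroExtend (signedPath n *ᵥ x) t =
      altSign t * zeroExtend x (t + 1) + altSign (t - 1) * zeroExtend x (t - 1) := by
  obtain ⟨i, rfl⟩ : ∃ i : Fin (2 * n), ((i : ℕ) : ℤ) = t := ⟨⟨t.toNat, by omega⟩, by simp [h0]⟩
  simp only [zeroExtend_natCast, mulVec, dotProduct, signedPath_apply_eq, add_mul, ite_mul,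
    zero_mul, Finset.sum_add_distrib, sum_ite_eq_zeroExtend]
  rw [zeroExtend_mul (fun _ => altSign (i : ℕ)), zeroExtend_mul altSign]

theorem zeroExtend_signedPath_sq_mulVec (n : ℕ) (x : Fin (2 * n) → ℝ) {t : ℤ} (h0 : 0 ≤ t)
    (h1 : t < 2 * n) : zeroExtend (signedPath n ^ 2 *ᵥ x) t =
      ((if t = 0 then 0 else 1) + (if t + 1 = 2 * n then 0 else 1)) * zeroExtend x t
        - zeroExtend x (t - 2) - zeroExtend x (t + 2) := by
  have hup : altSign t * zeroExtend (signedPath n *ᵥ x) (t + 1) =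
      if t + 1 = 2 * n then 0 else zeroExtend x t - zeroExtend x (t + 2) := by
    split_ifs with h
    · rw [zeroExtend_of_le _ h.ge, mul_zero]
    · rw [zeroExtend_signedPath_mulVec n x (by omega) (by omega), altSign_add_one,
        add_sub_cancel_right, show t + 1 + 1 = t + 2 by ring]
      linear_combination (zeroExtend x t - zeroExtend x (t + 2)) * altSign_mul_self t
  have hdown : altSign (t - 1) * zeroExtend (signedPath n *ᵥ x) (t - 1) =
      if t = 0 then 0 else zeroExtend x t - zeroExtend x (t - 2) := by
    split_ifs with h
    · rw [zeroExtend_of_neg _ (by omega), mul_zero]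
    · rw [zeroExtend_signedPath_mulVec n x (by omega) (by omega), altSign_sub_one (t - 1),
        sub_add_cancel, show t - 1 - 1 = t - 2 by ring]
      linear_combination (zeroExtend x t - zeroExtend x (t - 2)) * altSign_mul_self (t - 1)
  rw [sq, ← mulVec_mulVec, zeroExtend_signedPath_mulVec n _ h0 h1, hup, hdown]
  split_ifs with htop hbot hbot
  · omega
  · rw [zeroExtend_of_le x (t := t + 2) (by omega)]
    ring
  · rw [zeroExtend_of_neg x (t := t - 2) (by omega)]
    ring
  · ring

theorem gPoly_apply_zero : ∀ k, gPoly k 0 = (-1) ^ k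
  | 0 => by simp [gPoly]
  | 1 => by simp [gPoly]
  | k + 2 => by rw [gPoly, gPoly_apply_zero (k + 1), gPoly_apply_zero k]; ring

noncomputable def signedGPoly (j : ℕ) (μ : ℝ) : ℝ := (-1) ^ j * gPoly j μ

theorem signedGPoly_zero (μ : ℝ) : signedGPoly 0 μ = 1 := by
  simp [signedGPoly, gPoly]

theorem mul_signedGPoly_zero (μ : ℝ) :
    μ * signedGPoly 0 μ = signedGPoly 0 μ - signedGPoly 1 μ := by
  simp [signedGPoly, gPoly]

theorem mul_signedGPoly_succ (j : ℕ) (μ : ℝ) : μ * signedGPoly (j + 1) μ =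
    2 * signedGPoly (j + 1) μ - signedGPoly j μ - signedGPoly (j + 2) μ := by
  simp only [signedGPoly, gPoly, pow_succ]
  ring

section Recurrence

variable {μ : ℝ} {n : ℕ} {u : ℕ → ℝ}

theorem eq_signedGPoly_mul_of_recurrence (h0 : μ * u 0 = u 0 - u 1)
    (hsucc : ∀ j, j + 1 < n → μ * u (j + 1) = 2 * u (j + 1) - u j - u (j + 2)) :
    ∀ j ≤ n, u j = signedGPoly j μ * u 0 := by
  intro j
  induction j using Nat.twoStepInduction with
  | zero => simp [signedGPoly_zero]
  | one =>
    intro _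
    have h := mul_signedGPoly_zero μ
    rw [signedGPoly_zero] at h
    linear_combination h0 - u 0 * h
  | more j ih₀ ih₁ =>
    intro hj
    linear_combination hsucc j (by omega) - u 0 * mul_signedGPoly_succ j μ
      - (μ - 2) * ih₁ (by omega) - ih₀ (by omega)

theorem gPoly_eq_zero_of_recurrence (h0 : μ * u 0 = u 0 - u 1)
    (hsucc : ∀ j, j + 1 < n → μ * u (j + 1) = 2 * u (j + 1) - u j - u (j + 2))
    (hn : u n = 0) (hne : ∃ j ≤ n, u j ≠ 0) : gPoly n μ = 0 := by
  have hu := eq_signedGPoly_mul_of_recurrence h0 hsucc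
  obtain ⟨j, hjn, hj⟩ := hne
  have hu0 : u 0 ≠ 0 := fun h => hj (by rw [hu j hjn, h, mul_zero])
  have : signedGPoly n μ * u 0 = 0 := by rw [← hu n le_rfl, hn]
  simpa [signedGPoly, hu0] using this

end Recurrence

section Eigenvectors

variable {n : ℕ} {μ : ℝ} {x : Fin (2 * n) → ℝ}

theorem mul_zeroExtend_of_signedPath_sq_mulVec_eq (hx : signedPath n ^ 2 *ᵥ x = μ • x)
    {t : ℤ} (h0 : 0 ≤ t) (h1 : t < 2 * n) : μ * zeroExtend x t =
      ((if t = 0 then 0 else 1) + (if t + 1 = 2 * n then 0 else 1)) * zeroExtend x t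
        - zeroExtend x (t - 2) - zeroExtend x (t + 2) := by
  rw [← zeroExtend_signedPath_sq_mulVec n x h0 h1, hx]
  exact (zeroExtend_mul (fun _ => μ) x t).symm

theorem mul_zeroExtend_of_signedPath_sq_mulVec_eq_of_interior
    (hx : signedPath n ^ 2 *ᵥ x = μ • x) {t : ℤ} (h0 : 0 < t) (h1 : t + 1 < 2 * n) :
    μ * zeroExtend x t = 2 * zeroExtend x t - zeroExtend x (t - 2) - zeroExtend x (t + 2) := by
  rw [mul_zeroExtend_of_signedPath_sq_mulVec_eq hx h0.le (by omega), if_neg (by omega),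
    if_neg (by omega)]
  ring

theorem gPoly_eq_zero_of_signedPath_sq_mulVec_eq_of_even (hx : signedPath n ^ 2 *ᵥ x = μ • x)
    {j : ℕ} (hj : j < n) (hxj : zeroExtend x (2 * j) ≠ 0) : gPoly n μ = 0 := by
  apply gPoly_eq_zero_of_recurrence (u := fun j : ℕ => zeroExtend x (2 * j))
  · have := mul_zeroExtend_of_signedPath_sq_mulVec_eq hx le_rfl (by omega)
    rw [if_pos rfl, if_neg (by omega), zeroExtend_of_neg x (t := 0 - 2) (by norm_num)] at this
    norm_num at this ⊢
    linear_combination this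
  · intro j hj
    have := mul_zeroExtend_of_signedPath_sq_mulVec_eq_of_interior hx (t := 2 * (j + 1))
      (by omega) (by omega)
    push_cast
    rw [show (2 * ((j : ℤ) + 1) - 2) = 2 * j by ring,
      show (2 * ((j : ℤ) + 1) + 2) = 2 * (j + 2) by ring] at this
    linear_combination this
  · exact zeroExtend_of_le x (by simp)
  · exact ⟨j, hj.le, hxj⟩

/-- The odd coordinates, read from the top down, satisfy the same recurrence. -/
theorem gPoly_eq_zero_of_signedPath_sq_mulVec_eq_of_odd (hx : signedPath n ^ 2 *ᵥ x = μ • x)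
    {j : ℕ} (hj : j < n) (hxj : zeroExtend x (2 * j + 1) ≠ 0) : gPoly n μ = 0 := by
  apply gPoly_eq_zero_of_recurrence (u := fun j : ℕ => zeroExtend x (2 * n - 1 - 2 * j))
  · have := mul_zeroExtend_of_signedPath_sq_mulVec_eq hx (t := 2 * n - 1) (by omega) (by omega)
    rw [if_neg (by omega), if_pos (by ring),
      zeroExtend_of_le x (t := 2 * n - 1 + 2) (by omega)] at this
    norm_num at this ⊢
    linear_combination this
  · intro j hj
    have := mul_zeroExtend_of_signedPath_sq_mulVec_eq_of_interior hx
      (t := 2 * n - 1 - 2 * (j + 1)) (by omega) (by omega)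
    push_cast
    rw [show (2 * (n : ℤ) - 1 - 2 * (j + 1) - 2) = 2 * n - 1 - 2 * (j + 2) by ring,
      show (2 * (n : ℤ) - 1 - 2 * (j + 1) + 2) = 2 * n - 1 - 2 * j by ring] at this
    linear_combination this
  · exact zeroExtend_of_neg x (by omega)
  · refine ⟨n - 1 - j, by omega, ?_⟩
    rwa [show (2 * (n : ℤ) - 1 - 2 * ((n - 1 - j : ℕ) : ℤ)) = 2 * j + 1 by omega]

end Eigenvectors

theorem gPoly_eq_zero_of_hasEig_signedPath_sq {n : ℕ} {μ : ℝ}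
    (h : HasEig (signedPath n ^ 2) μ) : gPoly n μ = 0 := by
  obtain ⟨x, hx, hxμ⟩ := h
  obtain ⟨i, hi⟩ := Function.ne_iff.mp hx
  rw [← zeroExtend_natCast x i] at hi
  rcases Nat.even_or_odd' i with ⟨j, hj | hj⟩
  · exact gPoly_eq_zero_of_signedPath_sq_mulVec_eq_of_even hxμ (j := j) (by omega)
      (by simpa [hj] using hi)
  · exact gPoly_eq_zero_of_signedPath_sq_mulVec_eq_of_odd hxμ (j := j) (by omega)
      (by simpa [hj] using hi)

noncomputable def evenEigvec (n : ℕ) (μ : ℝ) : Fin (2 * n) → ℝ :=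
  fun i => if Even (i : ℕ) then signedGPoly ((i : ℕ) / 2) μ else 0

theorem zeroExtend_evenEigvec_two_mul {n : ℕ} {μ : ℝ} (h : gPoly n μ = 0) {j : ℕ} (hj : j ≤ n) :
    zeroExtend (evenEigvec n μ) (2 * j) = signedGPoly j μ := by
  rcases hj.lt_or_eq with hj | rfl
  · simpa [evenEigvec] using zeroExtend_natCast (evenEigvec n μ) ⟨2 * j, by omega⟩
  · rw [zeroExtend_of_le _ (by push_cast; rfl)]
    simp [signedGPoly, h]

theorem zeroExtend_evenEigvec_of_odd (n : ℕ) (μ : ℝ) {t : ℤ} (ht : Odd t) :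
    zeroExtend (evenEigvec n μ) t = 0 := by
  unfold zeroExtend
  split_ifs with ht'
  · have : ¬ Even t.toNat := by
      rw [← Int.even_coe_nat, Int.toNat_of_nonneg ht'.1]
      exact Int.not_even_iff_odd.mpr ht
    simp [evenEigvec, this]
  · rfl

theorem hasEig_signedPath_sq_of_gPoly_eq_zero {n : ℕ} {μ : ℝ} (h : gPoly n μ = 0) :
    HasEig (signedPath n ^ 2) μ := by
  have hn : n ≠ 0 := by
    rintro rfl
    simp [gPoly] at h
  have heven := fun j => zeroExtend_evenEigvec_two_mul (j := j) h
  refine ⟨evenEigvec n μ, fun h0 => ?_, ?_⟩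
  · simpa [evenEigvec, signedGPoly_zero] using congr_fun h0 ⟨0, by omega⟩
  ext i
  rw [← zeroExtend_natCast (signedPath n ^ 2 *ᵥ _), zeroExtend_signedPath_sq_mulVec n _
    (by omega) (by omega), Pi.smul_apply, smul_eq_mul, ← zeroExtend_natCast (evenEigvec n μ) i]
  rcases Nat.even_or_odd' i with ⟨j, hj | hj⟩
  · rw [hj]
    push_cast
    rcases j with _ | j
    · rw [heven 0 (by omega), zeroExtend_of_neg _ (t := 2 * ((0 : ℕ) : ℤ) - 2) (by simp),
        show 2 * ((0 : ℕ) : ℤ) + 2 = 2 * ((1 : ℕ) : ℤ) by simp, heven 1 (by omega),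
        if_pos (by simp), if_neg (by omega)]
      linear_combination -mul_signedGPoly_zero μ
    · rw [heven (j + 1) (by omega), show 2 * ((j + 1 : ℕ) : ℤ) - 2 = 2 * (j : ℤ) by push_cast; ring,
        heven j (by omega),
        show 2 * ((j + 1 : ℕ) : ℤ) + 2 = 2 * ((j + 2 : ℕ) : ℤ) by push_cast; ring,
        heven (j + 2) (by omega), if_neg (by omega), if_neg (by omega)]
      linear_combination -mul_signedGPoly_succ j μ
  · rw [hj]
    push_cast
    rw [zeroExtend_evenEigvec_of_odd n μ ⟨j, rfl⟩,
      zeroExtend_evenEigvec_of_odd n μ ⟨j - 1, by ring⟩,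
      zeroExtend_evenEigvec_of_odd n μ ⟨j + 1, by ring⟩]
    ring

theorem hasEig_signedPath_sq_iff {n : ℕ} {μ : ℝ} :
    HasEig (signedPath n ^ 2) μ ↔ gPoly n μ = 0 :=
  ⟨gPoly_eq_zero_of_hasEig_signedPath_sq, hasEig_signedPath_sq_of_gPoly_eq_zero⟩

open scoped MatrixOrder in
theorem nonneg_of_mem_spectrum_signedPath_sq {n : ℕ} {μ : ℝ}
    (hμ : μ ∈ spectrum ℝ (signedPath n ^ 2)) : 0 ≤ μ := by
  have hpsd : (signedPath n ^ 2).PosSemidef := by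
    rw [sq]
    nth_rewrite 1 [← (signedPath_isHermitian n).eq]
    exact posSemidef_conjTranspose_mul_self _
  exact spectrum_nonneg_of_nonneg hpsd.nonneg hμ

theorem isLeast_spectrum_signedPath_sq {n : ℕ} {β : ℝ} (hroot : gPoly n β = 0)
    (hmin : ∀ x : ℝ, 0 < x → x < β → gPoly n x ≠ 0) :
    IsLeast (spectrum ℝ (signedPath n ^ 2)) β := by
  refine ⟨(hasEig_iff_mem_spectrum _ _).1 (hasEig_signedPath_sq_iff.2 hroot), fun μ hμ => ?_⟩
  have hg := hasEig_signedPath_sq_iff.1 ((hasEig_iff_mem_spectrum _ _).2 hμ)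
  have hμ0 : μ ≠ 0 := by
    rintro rfl
    rw [gPoly_apply_zero] at hg
    exact pow_ne_zero n (by norm_num) hg
  by_contra! hlt
  exact hmin μ ((nonneg_of_mem_spectrum_signedPath_sq hμ).lt_of_ne' hμ0) hlt hg

theorem isLeast_spectrum_APn_sq {n : ℕ} {β : ℝ} (hroot : gPoly n β = 0)
    (hmin : ∀ x : ℝ, 0 < x → x < β → gPoly n x ≠ 0) :
    ∀ k : ℕ, IsLeast (spectrum ℝ (APn n k ^ 2)) ((k + 1) * β)
  | 0 => by
    rw [APn_zero_sq, spectrum_reindex, Nat.cast_zero, zero_add, one_mul]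
    exact isLeast_spectrum_signedPath_sq hroot hmin
  | k + 1 => by
    rw [APn_succ_sq, spectrum_reindex,
      show ((k + 1 : ℕ) + 1 : ℝ) * β = β + (k + 1) * β by push_cast; ring]
    exact isLeast_spectrum_kroneckerSum ((signedPath_isHermitian n).pow 2)
      (APn_sq_isHermitian n k) (isLeast_spectrum_signedPath_sq hroot hmin)
      (isLeast_spectrum_APn_sq hroot hmin k)

theorem APn_sq_min_eigenvalue_general (n : ℕ)
    (β : ℝ) (hroot : gPoly n β = 0)
    (hmin : ∀ x : ℝ, 0 < x → x < β → gPoly n x ≠ 0) (k : ℕ) :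
    (∀ μ : ℝ, HasEig ((APn n k) ^ 2) μ → ((k : ℝ) + 1) * β ≤ μ) ∧
    HasEig ((APn n k) ^ 2) (((k : ℝ) + 1) * β) := by
  have h := isLeast_spectrum_APn_sq hroot hmin k
  simp only [hasEig_iff_mem_spectrum]
  exact ⟨fun μ hμ => h.2 hμ, h.1⟩

/-- Fix `n ≥ 1` and let `β > 0` be a root of `g_n` such that `g_n` has no root in
`(0, β)`. For every `k ≥ 1` (here `APn n k` is the paper's `A_{k+1}`, `k : ℕ`), the
minimum eigenvalue of `A_k²` equals `kβ`: every eigenvalue `μ` of `A_k²` satisfies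
`μ ≥ kβ`, and `kβ` is an eigenvalue of `A_k²`. -/
theorem APn_sq_min_eigenvalue (n : ℕ) (hn : 1 ≤ n)
    (β : ℝ) (hβpos : 0 < β) (hroot : gPoly n β = 0)
    (hmin : ∀ x : ℝ, 0 < x → x < β → gPoly n x ≠ 0) (k : ℕ) :
    (∀ μ : ℝ, HasEig ((APn n k) ^ 2) μ → ((k : ℝ) + 1) * β ≤ μ) ∧
    HasEig ((APn n k) ^ 2) (((k : ℝ) + 1) * β) :=
  APn_sq_min_eigenvalue_general n β hroot hmin k
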